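/- Let ι and κ be nonempty finite index types and let M be a Hermitian matrix in Matrix (ι × κ) (ι × κ) ℂ. Then 𝒟_{full}(M) = (𝒟_ι ⊗ id_κ)(M) holds if and only if for every Hermitian Z ∈ Matrix (ι × κ) (ι × κ) ℂ one has trace (M * (𝒟_{full}(Z) − (𝒟_ι ⊗ id_κ)(Z))) = 0. (This is the orthogonality characterization of MISC: a superchannel is MISC iff its Choi matrix is orthogonal to the subspace K_MISC = { 𝒟_{full}(Z) − (𝒟_ι ⊗ id_κ)(Z) : Z Hermitian }.) -/
import Mathlib


open Matrix

noncomputable section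

/-- Full dephasing: keep only diagonal entries. -/
def dephFull {ι : Type*} [DecidableEq ι] (M : Matrix ι ι ℂ) : Matrix ι ι ℂ :=
  Matrix.of fun i j => if i = j then M i j else 0

/-- Partial dephasing of the first tensor factor of the index. -/
def dephFst {α β : Type*} [DecidableEq α] (M : Matrix (α × β) (α × β) ℂ) :
    Matrix (α × β) (α × β) ℂ :=
  Matrix.of fun p q => if p.1 = q.1 then M p q else 0

private lemma std_conjT {n : Type*} [DecidableEq n] (i j : n) (c : ℂ) :
    (Matrix.single i j c)ᴴ = Matrix.single j i (star c) := by
  ext r s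
  simp [Matrix.conjTranspose_apply, Matrix.single, apply_ite (star : ℂ → ℂ),
    and_comm]

private lemma trace_mul_std {n : Type*} [Fintype n] [DecidableEq n]
    (A : Matrix n n ℂ) (i j : n) (c : ℂ) :
    (A * Matrix.single i j c).trace = A j i * c := by
  simp [Matrix.trace, Matrix.diag, Matrix.mul_apply, Matrix.single,
    Finset.sum_ite_eq, ite_and]

/-- Orthogonality characterization of the MISC condition: a Hermitian matrix `M`
satisfies `𝒟_full(M) = (𝒟_ι ⊗ id_κ)(M)` iff it is orthogonal to the subspace
`K_MISC = { 𝒟_full(Z) − (𝒟_ι ⊗ id_κ)(Z) : Z Hermitian }`. -/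
theorem dephFull_eq_dephFst_iff_orthogonal
    {ι κ : Type*} [Fintype ι] [DecidableEq ι] [Nonempty ι]
    [Fintype κ] [DecidableEq κ] [Nonempty κ]
    (M : Matrix (ι × κ) (ι × κ) ℂ) (hM : M.IsHermitian) :
    dephFull M = dephFst M ↔
      ∀ Z : Matrix (ι × κ) (ι × κ) ℂ, Z.IsHermitian →
        (M * (dephFull Z - dephFst Z)).trace = 0 := by
  constructor
  · intro h Z _
    have hM0 : ∀ p q : ι × κ, p.1 = q.1 → p ≠ q → M p q = 0 := by
      intro p q h1 hne
      have := congrFun (congrFun h p) q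
      simpa [dephFull, dephFst, h1, hne] using this.symm
    have hterm : ∀ p q : ι × κ, M p q * (dephFull Z - dephFst Z) q p = 0 := by
      intro p q
      by_cases h1 : q.1 = p.1
      · by_cases h2 : q = p
        · simp [dephFull, dephFst, h1, h2, Matrix.sub_apply]
        · have : M p q = 0 := hM0 p q h1.symm (fun hh => h2 hh.symm)
          simp [this]
      · have hne : q ≠ p := fun hh => h1 (by rw [hh])
        simp [dephFull, dephFst, h1, hne, Matrix.sub_apply]
    simp only [Matrix.trace, Matrix.diag, Matrix.mul_apply]
    exact Finset.sum_eq_zero fun p _ => Finset.sum_eq_zero fun q _ => hterm p q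
  · intro h
    ext p q
    by_cases h1 : p.1 = q.1
    · by_cases h2 : p = q
      · simp [dephFull, dephFst, h1, h2]
      · -- show M p q = 0
        set c := M p q with hc
        set Z : Matrix (ι × κ) (ι × κ) ℂ :=
          Matrix.single q p (star c) + Matrix.single p q c with hZ
        have hZh : Z.IsHermitian := by
          unfold Matrix.IsHermitian
          rw [hZ, Matrix.conjTranspose_add, std_conjT, std_conjT, star_star, add_comm]
        have hdiff : dephFull Z - dephFst Z = -Z := by
          ext r s
          by_cases hrs : r = s
          · have hZrr : ∀ t, Z t t = 0 := by
              intro t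
              have e1 : ¬(q = t ∧ p = t) := by rintro ⟨rfl, rfl⟩; exact h2 rfl
              have e2 : ¬(p = t ∧ q = t) := by rintro ⟨rfl, rfl⟩; exact h2 rfl
              simp [hZ, Matrix.single, Matrix.add_apply, e1, e2]
            simp [dephFull, dephFst, hrs, hZrr]
          · by_cases hrs1 : r.1 = s.1
            · simp [dephFull, dephFst, hrs, hrs1, Matrix.sub_apply]
            · have hZrs : Z r s = 0 := by
                simp only [hZ, Matrix.add_apply, Matrix.single, Matrix.of_apply]
                have e1 : ¬(q = r ∧ p = s) := by
                  rintro ⟨rfl, rfl⟩; exact hrs1 h1.symm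
                have e2 : ¬(p = r ∧ q = s) := by
                  rintro ⟨rfl, rfl⟩; exact hrs1 h1
                simp [e1, e2]
              simp [dephFull, dephFst, hrs, hrs1, hZrs]
        have htr := h Z hZh
        rw [hdiff, Matrix.mul_neg, Matrix.trace_neg, neg_eq_zero, hZ,
          Matrix.mul_add, Matrix.trace_add, trace_mul_std, trace_mul_std] at htr
        have hMqp : M q p = star c := by
          have h3 := congrFun (congrFun hM q) p
          rw [Matrix.conjTranspose_apply] at h3
          rw [hc]; exact h3.symm
        rw [hMqp, ← hc] at htr
        have : c * star c + star c * c = 0 := by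
          have : M p q * star c + star c * c = 0 := by
            -- from htr : M p q * (star c) + (M q p) * c = 0 form check
            simpa [hMqp] using htr
          simpa [← hc] using this
        have hc0 : c = 0 := by
          have h2' : (2 : ℂ) * (c * star c) = 0 := by ring_nf; linear_combination this
          have := mul_eq_zero.mp h2'
          rcases this with h' | h'
          · norm_num at h'
          · exact (mul_eq_zero.mp h').elim id (fun hs => by simpa using congrArg star hs)
        simp [dephFull, dephFst, h1, h2, ← hc, hc0]
    · have h2 : p ≠ q := fun hh => h1 (by rw [hh])
      simp [dephFull, dephFst, h1, h2]

end
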